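/- Let C be a d-clutter on a finite vertex set V such that ⟨C⟩ is d-chorded, and let F ∈ SMS(C^+). Then ⟨C − F⟩ is d-chorded, where C − F = C \ {F} is the clutter obtained from C by removing the circuit F. -/

import Mathlib

namespace ClutterPaper

variable {α : Type*} [DecidableEq α]

/-- `C` is a uniform clutter on vertex set `V` all of whose circuits have cardinality `c`
(i.e. a `(c-1)`-dimensional uniform clutter). -/
def IsClutter (V : Finset α) (c : ℕ) (C : Finset (Finset α)) : Prop :=
  ∀ F ∈ C, F ⊆ V ∧ F.card = c

/-- The complement clutter `C̄`: all `c`-subsets of `V` not in `C`. -/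
def compClutter (V : Finset α) (c : ℕ) (C : Finset (Finset α)) : Finset (Finset α) :=
  V.powersetCard c \ C

/-- `C^∨ = { V \ F | F ∈ C̄ }`. -/
def clutterDual (V : Finset α) (c : ℕ) (C : Finset (Finset α)) : Finset (Finset α) :=
  (compClutter V c C).image fun F => V \ F

/-- `A` is a clique of the clutter `C` (with circuit cardinality `c`) on vertex set `V`:
all `c`-subsets of `A` are circuits. -/
def IsClique (V : Finset α) (c : ℕ) (C : Finset (Finset α)) (A : Finset α) : Prop :=
  A ⊆ V ∧ ∀ F ⊆ A, F.card = c → F ∈ C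

/-- The closed neighborhood `N_C[e] = e ∪ { v ∈ V | e ∪ {v} ∈ C }`. -/
def closedNbhd (V : Finset α) (C : Finset (Finset α)) (e : Finset α) : Finset α :=
  e ∪ V.filter fun v => insert v e ∈ C

/-- `e` is a maximal subcircuit of the clutter `C` with circuit cardinality `c`:
`e` has cardinality `c - 1` and is contained in some circuit. -/
def IsMS (c : ℕ) (C : Finset (Finset α)) (e : Finset α) : Prop :=
  e.card + 1 = c ∧ ∃ F ∈ C, e ⊆ F

/-- `e` is a simplicial maximal subcircuit: a maximal subcircuit whose closed
neighborhood is a clique. -/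
def IsSMS (V : Finset α) (c : ℕ) (C : Finset (Finset α)) (e : Finset α) : Prop :=
  IsMS c C e ∧ IsClique V c C (closedNbhd V C e)

/-- `e` is a free maximal subcircuit: contained in exactly one circuit. -/
def IsFreeMS (c : ℕ) (C : Finset (Finset α)) (e : Finset α) : Prop :=
  e.card + 1 = c ∧ ∃! F, F ∈ C ∧ e ⊆ F

/-- Deletion `C − e` of a maximal subcircuit: the circuits not containing `e`. -/
def delMS (C : Finset (Finset α)) (e : Finset α) : Finset (Finset α) :=
  C.filter fun F => ¬ e ⊆ F

/-- Deletion of a vertex: circuits (or faces) not containing `v`. -/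
def delVert (C : Finset (Finset α)) (v : α) : Finset (Finset α) :=
  C.filter fun F => v ∉ F

/-- Chordality of a uniform clutter (circuit cardinality `c`) on `V`: there is a sequence of
deletions of simplicial maximal subcircuits ending in the clutter with no circuits. -/
inductive Chordal (V : Finset α) (c : ℕ) : Finset (Finset α) → Prop
  | empty : Chordal V c ∅
  | step {C : Finset (Finset α)} (e : Finset α) :
      IsSMS V c C e → Chordal V c (delMS C e) → Chordal V c C

/-- The ascent `C⁺` of a clutter with circuit cardinality `c`: all `(c+1)`-subsets of `V`
that are cliques of `C`. -/
def ascent (V : Finset α) (c : ℕ) (C : Finset (Finset α)) : Finset (Finset α) :=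
  (V.powersetCard (c + 1)).filter fun A => A.powersetCard c ⊆ C

/-- The simplicial complex `⟨D⟩` generated by a clutter `D`: all subsets of its elements. -/
def complexOf (D : Finset (Finset α)) : Finset (Finset α) :=
  D.biUnion Finset.powerset

/-- A family of finsets is a simplicial complex if it is downward closed. -/
def IsComplex (Δ : Finset (Finset α)) : Prop :=
  ∀ F ∈ Δ, ∀ G ⊆ F, G ∈ Δ

/-- The facets (maximal faces) of a simplicial complex. -/
def facets (Δ : Finset (Finset α)) : Finset (Finset α) :=
  Δ.filter fun F => ∀ G ∈ Δ, F ⊆ G → F = G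

/-- `link_Δ(v) = { F \ {v} | v ∈ F ∈ Δ }`. -/
def link (Δ : Finset (Finset α)) (v : α) : Finset (Finset α) :=
  (Δ.filter fun F => v ∈ F).image fun F => F.erase v

/-- `v` is a shedding vertex of `Δ`: no face of `link_Δ(v)` is a facet of `Δ − v`. -/
def Shedding (Δ : Finset (Finset α)) (v : α) : Prop :=
  ∀ F ∈ link Δ v, F ∉ facets (delVert Δ v)

/-- Alexander dual of a simplicial complex on vertex set `V`:
`Δ^∨ = { V \ F | F ⊆ V, F ∉ Δ }`. -/
def alexDual (V : Finset α) (Δ : Finset (Finset α)) : Finset (Finset α) :=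
  (V.powerset.filter fun F => F ∉ Δ).image fun F => V \ F

/-- `Δ` is pure with all facets of cardinality `c` (dimension `c - 1`), and nonempty. -/
def PureDim (Δ : Finset (Finset α)) (c : ℕ) : Prop :=
  Δ.Nonempty ∧ ∀ F ∈ facets Δ, F.card = c

/-- Vertex decomposability of a simplicial complex. -/
inductive VDecomp : Finset (Finset α) → Prop
  | simplex {Δ : Finset (Finset α)} : (facets Δ).card = 1 → VDecomp Δ
  | shed {Δ : Finset (Finset α)} (v : α) : Shedding Δ v →
      VDecomp (link Δ v) → VDecomp (delVert Δ v) → VDecomp Δ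

/-- The vertex set of a clutter (or of the complex it generates). -/
def vertexSet (Ω : Finset (Finset α)) : Finset α :=
  Ω.biUnion id

/-- `Ω` (given by its set of facets, each of cardinality `d+1`) is a `d`-cycle:
nonempty, pure of dimension `d`, `d`-path connected, and every `(d-1)`-dimensional
face lies in an even number of `d`-faces. -/
def IsCycle (d : ℕ) (Ω : Finset (Finset α)) : Prop :=
  Ω.Nonempty ∧ (∀ F ∈ Ω, F.card = d + 1) ∧
    (∀ F ∈ Ω, ∀ G ∈ Ω,
      Relation.ReflTransGen (fun A B => A ∈ Ω ∧ B ∈ Ω ∧ (A ∩ B).card = d) F G) ∧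
    ∀ e : Finset α, e.card = d → Even ((Ω.filter fun F => e ⊆ F).card)

/-- A face-minimal `d`-cycle: no `d`-cycle has a strictly smaller set of `d`-faces. -/
def FaceMinimalCycle (d : ℕ) (Ω : Finset (Finset α)) : Prop :=
  IsCycle d Ω ∧ ∀ Ω' : Finset (Finset α), IsCycle d Ω' → Ω' ⊆ Ω → Ω' = Ω

/-- `Ω` is `d`-complete: it contains every `(d+1)`-subset of its vertex set. -/
def DComplete (d : ℕ) (Ω : Finset (Finset α)) : Prop :=
  ∀ F ⊆ vertexSet Ω, F.card = d + 1 → F ∈ Ω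

/-- The complex `⟨C⟩` generated by the `d`-dimensional clutter `C` is `d`-chorded. -/
def Chorded (d : ℕ) (C : Finset (Finset α)) : Prop :=
  ∀ Ω : Finset (Finset α), FaceMinimalCycle d Ω → Ω ⊆ C → ¬ DComplete d Ω →
    ∃ (k : ℕ) (Ωs : Fin k → Finset (Finset α)), 2 ≤ k ∧
      (∀ i, IsCycle d (Ωs i) ∧ Ωs i ⊆ C) ∧
      (∀ F ∈ Ω, ∃ i, F ∈ Ωs i) ∧
      (∀ F ∈ Ω, Odd ((Finset.univ.filter fun i => F ∈ Ωs i).card)) ∧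
      (∀ F : Finset α, (∃ i, F ∈ Ωs i) → F ∉ Ω →
        Even ((Finset.univ.filter fun i => F ∈ Ωs i).card)) ∧
      ∀ i, vertexSet (Ωs i) ⊂ vertexSet Ω

/-- The circuits of `D` admit an admissible order. -/
def HasAdmissibleOrder (D : Finset (Finset α)) : Prop :=
  ∃ (t : ℕ) (F : Fin t → Finset α), Function.Injective F ∧
    (∀ G, G ∈ D ↔ ∃ i, F i = G) ∧
    ∀ i j : Fin t, j < i →
      ∃ l ∈ F j \ F i, ∃ k : Fin t, k < i ∧ F k \ F i = {l}

/-- Contraction `D/v` of a (not necessarily uniform) clutter: the minimal sets of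
`{ e \ {v} | e ∈ D }`. -/
def contractAux (D : Finset (Finset α)) (v : α) : Finset (Finset α) :=
  D.image fun e => e.erase v

def contract (D : Finset (Finset α)) (v : α) : Finset (Finset α) :=
  (contractAux D v).filter fun e => ∀ f ∈ contractAux D v, f ⊆ e → f = e

/-- `D` has a simplicial vertex (trivially true if `D` has no vertices). -/
def HasSimpVertex (D : Finset (Finset α)) : Prop :=
  vertexSet D = ∅ ∨ ∃ v ∈ vertexSet D, ∀ e₁ ∈ D, ∀ e₂ ∈ D, v ∈ e₁ → v ∈ e₂ →
    ∃ e₃ ∈ D, e₃ ⊆ (e₁ ∪ e₂).erase v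

/-- `D` is W-chordal: every clutter obtained from `D` by a sequence of vertex deletions
and contractions has a simplicial vertex. -/
def WChordal (D : Finset (Finset α)) : Prop :=
  ∀ D' : Finset (Finset α),
    Relation.ReflTransGen (fun X Y => ∃ v, Y = delVert X v ∨ Y = contract X v) D D' →
    HasSimpVertex D'


/-!
Read families of `d`-faces as `𝔽₂`-chains. For a face-minimal, non-complete cycle `Ω` of `C − F`,
chordedness of `C` writes `Ω` as a sum of cycles `Ωᵢ` of `C` on fewer vertices. Every cycle of
`C` through `F` contains a vertex `wᵢ` with `F + wᵢ` a clique of `C`, and adding the boundary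
`∂(F + wᵢ)` removes `F` from `Ωᵢ`; the result splits into its `d`-path components. Since `N[F]`
is a clique of `C⁺`, `∂(F + wᵢ) + ∂(F + w₀)` for a fixed `w₀` is the sum of the boundaries of the
simplices `e + wᵢ + w₀`, `e` a `d`-subset of `F`, all of which lie in `C − F` and have `d + 2`
vertices. Finally `F` lies on an even number of the `Ωᵢ`, so the copies of `∂(F + w₀)` cancel.
-/

open Finset
open scoped symmDiff

section Chords

variable {d : ℕ} {D X Y Z Λ Ω : Finset (Finset α)} {F G : Finset α}

lemma mem_vertexSet {v : α} : v ∈ vertexSet X ↔ ∃ G ∈ X, v ∈ G := by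
  simp [vertexSet]

lemma subset_vertexSet (h : G ∈ X) : G ⊆ vertexSet X :=
  fun _ hv => mem_vertexSet.2 ⟨G, h, hv⟩

lemma vertexSet_mono (h : X ⊆ Y) : vertexSet X ⊆ vertexSet Y :=
  biUnion_subset_biUnion_of_subset_left _ h

lemma vertexSet_powersetCard_subset (S : Finset α) (k : ℕ) : vertexSet (S.powersetCard k) ⊆ S :=
  fun _ hv => by
    obtain ⟨G, hG, hvG⟩ := mem_vertexSet.1 hv
    exact (mem_powersetCard.1 hG).1 hvG

lemma IsClutter.vertexSet_subset {V : Finset α} {c : ℕ} {C : Finset (Finset α)}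
    (hC : IsClutter V c C) (hΛ : Λ ⊆ C) : vertexSet Λ ⊆ V := fun _ hv => by
  obtain ⟨G, hG, hvG⟩ := mem_vertexSet.1 hv
  exact (hC G (hΛ hG)).1 hvG

lemma card_inter_lt_of_ne {A B : Finset α} {n : ℕ} (hA : A.card = n) (hB : B.card = n)
    (hne : A ≠ B) : (A ∩ B).card < n := by
  refine lt_of_le_of_ne (hA ▸ card_le_card inter_subset_left) fun h => hne ?_
  have hAB : A ∩ B = A := eq_of_subset_of_card_le inter_subset_left (by omega)
  exact eq_of_subset_of_card_le (hAB ▸ inter_subset_right) (by omega)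

/-- `Z` as a chain with coefficients in `𝔽₂`. -/
def chain (Z : Finset (Finset α)) (G : Finset α) : ZMod 2 := if G ∈ Z then 1 else 0

lemma chain_symmDiff (X Y : Finset (Finset α)) : chain (X ∆ Y) = chain X + chain Y := by
  funext G
  by_cases hX : G ∈ X <;> by_cases hY : G ∈ Y <;> simp [chain, mem_symmDiff, hX, hY]
  decide

lemma chain_injective : Function.Injective (chain : Finset (Finset α) → Finset α → ZMod 2) := by
  intro X Y h
  ext G
  have := congrFun h G
  by_cases hX : G ∈ X <;> by_cases hY : G ∈ Y <;> simp_all [chain]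

lemma sum_chain_ofFn_apply {k : ℕ} (Ωs : Fin k → Finset (Finset α)) (G : Finset α) :
    ((List.ofFn Ωs).map chain).sum G = ((univ.filter fun i => G ∈ Ωs i).card : ZMod 2) := by
  rw [List.map_ofFn, List.sum_ofFn, Finset.sum_apply]
  simp [chain, Finset.sum_boole]

/-- `F ∉ Ω` means that `F` lies on an even number of the members of `L`, so the copies of `c`
cancel. -/
lemma sum_map_chain_add_smul {L : List (Finset (Finset α))} (hL : (L.map chain).sum = chain Ω)
    (hF : F ∉ Ω) (c : Finset α → ZMod 2) :
    (L.map fun Z => chain Z + chain Z F • c).sum = chain Ω := by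
  have hF₀ : (L.map fun Z => chain Z F).sum = 0 := by
    have := congrFun hL F
    rw [Pi.list_sum_apply, List.map_map] at this
    exact this.trans (if_neg hF)
  have hsmul : (L.map fun Z => chain Z F • c).sum = (L.map fun Z => chain Z F).sum • c := by
    rw [List.sum_smul, List.map_map]
    rfl
  rw [List.sum_map_add, hL, hsmul, hF₀, zero_smul, add_zero]

lemma exists_list_sum_map_eq {ι β M : Type*} [AddMonoid M] {P : β → Prop} {g : β → M}
    {f : ι → M} {l : List ι} (h : ∀ x ∈ l, ∃ R : List β, (∀ y ∈ R, P y) ∧ (R.map g).sum = f x) :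
    ∃ R : List β, (∀ y ∈ R, P y) ∧ (R.map g).sum = (l.map f).sum := by
  induction l with
  | nil => exact ⟨[], by simp, by simp⟩
  | cons x l ih =>
    obtain ⟨R, hR, hRsum⟩ := h x List.mem_cons_self
    obtain ⟨R', hR', hR'sum⟩ := ih fun y hy => h y (List.mem_cons_of_mem _ hy)
    refine ⟨R ++ R', fun y hy => ?_, by simp [hRsum, hR'sum]⟩
    exact (List.mem_append.1 hy).elim (hR y) (hR' y)

def IsChordCycle (d : ℕ) (D Ω Y : Finset (Finset α)) : Prop :=
  IsCycle d Y ∧ Y ⊆ D ∧ vertexSet Y ⊂ vertexSet Ω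

/-- Conditions (a)–(d) of `Chorded`, with the cycles `Ωᵢ` listed and (b), (c) read as an identity
of `𝔽₂`-chains. -/
def IsChording (d : ℕ) (D Ω : Finset (Finset α)) (L : List (Finset (Finset α))) : Prop :=
  (∀ Y ∈ L, IsChordCycle d D Ω Y) ∧ (L.map chain).sum = chain Ω

lemma IsChording.two_le_length {L : List (Finset (Finset α))} (hΩ : Ω.Nonempty)
    (hL : IsChording d D Ω L) : 2 ≤ L.length := by
  obtain ⟨G, hG⟩ := hΩ
  rcases L with _ | ⟨Z, _ | ⟨Z', L⟩⟩
  · simpa [chain, hG] using congrFun hL.2 G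
  · have hZ : Z = Ω := chain_injective (by simpa using hL.2)
    exact absurd (hL.1 Z List.mem_cons_self).2.2 (hZ ▸ ssubset_irrefl _)
  · simp

lemma chorded_iff : Chorded d D ↔ ∀ Ω, FaceMinimalCycle d Ω → Ω ⊆ D → ¬ DComplete d Ω →
    ∃ L, IsChording d D Ω L := by
  refine forall₄_congr fun Ω hΩ _ _ => ⟨?_, ?_⟩
  · rintro ⟨k, Ωs, -, hcyc, -, hodd, heven, hvert⟩
    refine ⟨List.ofFn Ωs, fun Y hY => ?_, funext fun G => ?_⟩
    · obtain ⟨i, rfl⟩ := (List.mem_ofFn' Ωs Y).1 hY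
      exact ⟨(hcyc i).1, (hcyc i).2, hvert i⟩
    · rw [sum_chain_ofFn_apply]
      by_cases hG : G ∈ Ω
      · simpa [chain, hG] using ZMod.natCast_eq_one_iff_odd.2 (hodd G hG)
      · rw [chain, if_neg hG, ZMod.natCast_eq_zero_iff_even]
        by_cases hex : ∃ i, G ∈ Ωs i
        · exact heven G hex hG
        · simp [not_exists.1 hex]
  · rintro ⟨L, hL⟩
    have hcount : ∀ G, ((univ.filter fun i => G ∈ L.get i).card : ZMod 2) = chain Ω G := by
      intro G
      rw [← sum_chain_ofFn_apply, List.ofFn_get, hL.2]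
    have hodd : ∀ G ∈ Ω, Odd (univ.filter fun i => G ∈ L.get i).card := fun G hG =>
      ZMod.natCast_eq_one_iff_odd.1 (by rw [hcount, chain, if_pos hG])
    refine ⟨L.length, L.get, hL.two_le_length hΩ.1.1, fun i => ?_, fun G hG => ?_, hodd,
      fun G _ hG => ZMod.natCast_eq_zero_iff_even.1 (by rw [hcount, chain, if_neg hG]),
      fun i => (hL.1 _ (List.get_mem L i)).2.2⟩
    · exact ⟨(hL.1 _ (List.get_mem L i)).1, (hL.1 _ (List.get_mem L i)).2.1⟩
    · obtain ⟨i, hi⟩ := card_pos.1 (hodd G hG).pos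
      exact ⟨i, (mem_filter.1 hi).2⟩

/-- A cycle of `𝔽₂`-chains: unlike `IsCycle`, it may be empty or disconnected. -/
def IsMod2Cycle (d : ℕ) (X : Finset (Finset α)) : Prop :=
  (∀ G ∈ X, G.card = d + 1) ∧ ∀ e : Finset α, e.card = d → Even ((X.filter fun G => e ⊆ G).card)

lemma IsCycle.isMod2Cycle (h : IsCycle d X) : IsMod2Cycle d X :=
  ⟨h.2.1, h.2.2.2⟩

lemma even_card_symmDiff {β : Type*} [DecidableEq β] {A B : Finset β} (hA : Even A.card)
    (hB : Even B.card) : Even (A ∆ B).card := by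
  rw [symmDiff_def, sup_eq_union, card_union_of_disjoint disjoint_sdiff_sdiff]
  have hA' := card_sdiff_add_card_inter A B
  have hB' := card_sdiff_add_card_inter B A
  rw [inter_comm] at hB'
  rw [Nat.even_iff] at hA hB ⊢
  omega

lemma IsMod2Cycle.symmDiff (hX : IsMod2Cycle d X) (hY : IsMod2Cycle d Y) :
    IsMod2Cycle d (X ∆ Y) := by
  refine ⟨fun G hG => (mem_symmDiff.1 hG).elim (fun h => hX.1 G h.1) (fun h => hY.1 G h.1),
    fun e he => ?_⟩
  have hfilter : (X ∆ Y).filter (e ⊆ ·) = X.filter (e ⊆ ·) ∆ Y.filter (e ⊆ ·) := by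
    ext G
    simp only [mem_filter, mem_symmDiff]
    tauto
  rw [hfilter]
  exact even_card_symmDiff (hX.2 e he) (hY.2 e he)

lemma IsMod2Cycle.exists_isCycle_subset (hX : IsMod2Cycle d X) {A : Finset α} (hA : A ∈ X) :
    ∃ Z ⊆ X, A ∈ Z ∧ IsCycle d Z := by
  classical
  let adj (Y : Finset (Finset α)) (G H : Finset α) : Prop := G ∈ Y ∧ H ∈ Y ∧ (G ∩ H).card = d
  set Z := X.filter (Relation.ReflTransGen (adj X) A)
  have hAZ : A ∈ Z := mem_filter.2 ⟨hA, .refl⟩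
  have hpath : ∀ G ∈ Z, Relation.ReflTransGen (adj Z) A G := by
    intro G hG
    induction (mem_filter.1 hG).2 with
    | refl => exact .refl
    | @tail H K hAH hHK ih =>
      have hHZ : H ∈ Z := mem_filter.2 ⟨hHK.1, hAH⟩
      exact (ih hHZ).tail ⟨hHZ, hG, hHK.2.2⟩
  have : Std.Symm (adj Z) := ⟨fun G H h => ⟨h.2.1, h.1, by rw [inter_comm]; exact h.2.2⟩⟩
  refine ⟨Z, filter_subset _ _, hAZ, ⟨A, hAZ⟩, fun G hG => hX.1 G (filter_subset _ _ hG),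
    fun G hG H hH => (Std.Symm.symm _ _ (hpath G hG)).trans (hpath H hH), fun e he => ?_⟩
  -- two faces of `X` through the same `d`-set `e` are adjacent, so `Z` has all of them or none
  by_cases hZe : ∃ G ∈ Z, e ⊆ G
  · obtain ⟨G, hGZ, heG⟩ := hZe
    suffices Z.filter (e ⊆ ·) = X.filter (e ⊆ ·) by rw [this]; exact hX.2 e he
    refine (filter_subset_filter _ (filter_subset _ _)).antisymm fun H hH => ?_
    obtain ⟨hHX, heH⟩ := mem_filter.1 hH
    refine mem_filter.2 ⟨mem_filter.2 ⟨hHX, ?_⟩, heH⟩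
    obtain ⟨hGX, hAG⟩ := mem_filter.1 hGZ
    obtain rfl | hne := eq_or_ne G H
    · exact hAG
    have hle := he ▸ card_le_card (subset_inter heG heH)
    have hlt := card_inter_lt_of_ne (hX.1 G hGX) (hX.1 H hHX) hne
    exact hAG.tail ⟨hGX, hHX, by omega⟩
  · rw [filter_false_of_mem (by simpa using hZe)]
    simp

lemma IsMod2Cycle.exists_sum_chain_eq (hX : IsMod2Cycle d X) :
    ∃ L : List (Finset (Finset α)), (∀ Z ∈ L, IsCycle d Z ∧ Z ⊆ X) ∧
      (L.map chain).sum = chain X := by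
  induction hn : X.card using Nat.strong_induction_on generalizing X with
  | _ n ih =>
  obtain rfl | ⟨A, hA⟩ := X.eq_empty_or_nonempty
  · exact ⟨[], by simp, by funext G; simp [chain]⟩
  obtain ⟨Z, hZX, hAZ, hZ⟩ := hX.exists_isCycle_subset hA
  have hrest : IsMod2Cycle d (X \ Z) := symmDiff_of_ge hZX ▸ hX.symmDiff hZ.isMod2Cycle
  obtain ⟨L, hL, hLsum⟩ := ih _ (hn ▸ card_lt_card (sdiff_ssubset hZX ⟨A, hAZ⟩)) hrest rfl
  refine ⟨Z :: L, ?_, ?_⟩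
  · simp only [List.mem_cons, forall_eq_or_imp]
    exact ⟨⟨hZ, hZX⟩, fun Y hY => ⟨(hL Y hY).1, (hL Y hY).2.trans sdiff_subset⟩⟩
  · rw [List.map_cons, List.sum_cons, hLsum, ← symmDiff_of_ge hZX, chain_symmDiff, add_comm,
      add_assoc, ZModModule.add_self, add_zero]

/-- Unlike `card_filter_powersetCard_subset`, this also covers `n < #t`, where
`(#s - #t).choose (n - #t)` would be the junk value `1`. -/
lemma card_filter_powersetCard_superset (s t : Finset α) (n : ℕ) :
    ((s.powersetCard n).filter (t ⊆ ·)).card =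
      if t ⊆ s ∧ t.card ≤ n then (s.card - t.card).choose (n - t.card) else 0 := by
  split_ifs with h
  · exact card_filter_powersetCard_subset t s n h.1 h.2
  · refine card_eq_zero.2 (filter_false_of_mem fun e he hte => h ⟨hte.trans ?_, ?_⟩)
    · exact (mem_powersetCard.1 he).1
    · exact (mem_powersetCard.1 he).2 ▸ card_le_card hte

lemma isCycle_powersetCard {S : Finset α} (hS : S.card = d + 2) :
    IsCycle d (S.powersetCard (d + 1)) := by
  refine ⟨powersetCard_nonempty.2 (by omega), fun G hG => (mem_powersetCard.1 hG).2,
    fun A hA B hB => ?_, fun e he => ?_⟩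
  · obtain rfl | hne := eq_or_ne A B
    · exact .refl
    refine .single ⟨hA, hB, ?_⟩
    rw [mem_powersetCard] at hA hB
    have := card_inter_lt_of_ne hA.2 hB.2 hne
    have := card_union_add_card_inter A B
    have := card_le_card (union_subset hA.1 hB.1)
    omega
  · rw [card_filter_powersetCard_superset, hS, he]
    split_ifs
    · simp [show d + 2 - d = 2 by omega, show d + 1 - d = 1 by omega]
    · simp

lemma card_filter_cone (hF : F.card = d + 1) {u v : α} (huv : u ≠ v) (hu : u ∉ F) (hv : v ∉ F)
    (G : Finset α) :
    (((F.powersetCard d).filter fun e => G ∈ (insert u (insert v e)).powersetCard (d + 1)).card :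
        ZMod 2) =
      chain ((insert u F).powersetCard (d + 1)) G +
        chain ((insert v F).powersetCard (d + 1)) G := by
  wlog hvu : v ∈ G → u ∈ G generalizing u v
  · have := this huv.symm hv hu (by tauto)
    simp only [insert_comm v u] at this
    rwa [add_comm (chain _ G)]
  by_cases hG : G.card = d + 1
  swap
  · simp [chain, mem_powersetCard, hG]
  have hfilter : ((F.powersetCard d).filter fun e => G ∈ (insert u (insert v e)).powersetCard
      (d + 1)) = (F.powersetCard d).filter (G \ {u, v} ⊆ ·) := by
    refine filter_congr fun e _ => ?_
    rw [mem_powersetCard, and_iff_left hG, sdiff_le_iff, sup_eq_union, insert_union, ← insert_eq]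
  rw [hfilter, card_filter_powersetCard_superset]
  by_cases huG : u ∈ G
  · have hvF : ¬ G ⊆ insert v F := fun h => by simpa [huv, hu] using h huG
    by_cases hvG : v ∈ G
    · have huF : ¬ G ⊆ insert u F := fun h => by simpa [huv.symm, hv] using h hvG
      have hcard := card_sdiff_add_card_eq_card (insert_subset huG (singleton_subset_iff.2 hvG))
      rw [card_pair huv, hG] at hcard
      simp only [chain, mem_powersetCard, huF, hvF, false_and, if_false, add_zero, hF]
      split_ifs
      · rw [show d + 1 - (G \ {u, v}).card = 2 by omega, show d - (G \ {u, v}).card = 1 by omega]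
        decide
      · simp
    · have hGu : G \ {u, v} = G.erase u := by
        ext x
        simp only [mem_sdiff, mem_insert, mem_singleton, mem_erase]
        grind
      simp only [chain, mem_powersetCard, hvF, if_false, add_zero, hGu, hG,
        subset_insert_iff, card_erase_of_mem huG, hF, Nat.add_sub_cancel, le_refl, and_true]
      split_ifs <;> simp
  · have hvG : v ∉ G := fun h => huG (hvu h)
    have hGuv : G \ {u, v} = G := sdiff_eq_self_of_disjoint (by simp [huG, hvG])
    simp only [chain, mem_powersetCard, subset_insert_iff_of_notMem huG,
      subset_insert_iff_of_notMem hvG, hGuv, hG]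
    simp [ZModModule.add_self]

lemma sum_chain_cone (hF : F.card = d + 1) {u v : α} (huv : u ≠ v) (hu : u ∉ F) (hv : v ∉ F) :
    ((F.powersetCard d).toList.map
        fun e => chain ((insert u (insert v e)).powersetCard (d + 1))).sum =
      chain ((insert u F).powersetCard (d + 1)) + chain ((insert v F).powersetCard (d + 1)) := by
  funext G
  rw [sum_map_toList, Finset.sum_apply, Pi.add_apply, ← card_filter_cone hF huv hu hv G]
  simp [chain, sum_boole]

lemma IsCycle.exists_faceMinimalCycle_subset (hΛ : IsCycle d Λ) (hF : F ∈ Λ) :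
    ∃ Λ' ⊆ Λ, F ∈ Λ' ∧ FaceMinimalCycle d Λ' := by
  induction hn : Λ.card using Nat.strong_induction_on generalizing Λ with
  | _ n ih =>
  by_cases hmin : ∀ M, IsCycle d M → M ⊆ Λ → M = Λ
  · exact ⟨Λ, subset_rfl, hF, hΛ, hmin⟩
  push Not at hmin
  obtain ⟨M, hM, hMΛ, hne⟩ := hmin
  obtain ⟨Z, hZΛ, hFZ, hZ⟩ : ∃ Z ⊂ Λ, F ∈ Z ∧ IsCycle d Z := by
    by_cases hFM : F ∈ M
    · exact ⟨M, ssubset_of_subset_of_ne hMΛ hne, hFM, hM⟩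
    obtain ⟨Z, hZ, hFZ, hZc⟩ := (symmDiff_of_ge hMΛ ▸ hΛ.isMod2Cycle.symmDiff
      hM.isMod2Cycle).exists_isCycle_subset (mem_sdiff.2 ⟨hF, hFM⟩)
    exact ⟨Z, hZ.trans_ssubset (sdiff_ssubset hMΛ hM.1), hFZ, hZc⟩
  obtain ⟨Λ', hΛ'Z, hFΛ', hΛ'⟩ := ih _ (hn ▸ card_lt_card hZΛ) hZ hFZ rfl
  exact ⟨Λ', hΛ'Z.trans hZΛ.subset, hFΛ', hΛ'⟩

lemma IsCycle.exists_mem_vertexSet_notMem (hΛ : IsCycle d Λ) (hF : F ∈ Λ) :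
    ∃ v ∈ vertexSet Λ, v ∉ F := by
  by_contra! hall
  have hFc := hΛ.2.1 F hF
  obtain ⟨e, heF, he⟩ := exists_subset_card_eq (show d ≤ F.card by omega)
  have hsingle : Λ.filter (e ⊆ ·) = {F} := by
    refine eq_singleton_iff_unique_mem.2 ⟨mem_filter.2 ⟨hF, heF⟩, fun G hG => ?_⟩
    obtain ⟨hGΛ, -⟩ := mem_filter.1 hG
    exact eq_of_subset_of_card_le (fun v hv => hall v (subset_vertexSet hGΛ hv))
      (by rw [hΛ.2.1 G hGΛ, hFc])
  simpa [hsingle] using hΛ.2.2.2 e he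

end Chords

section SimplicialFace

variable {V : Finset α} {d : ℕ} {C Λ Ω Z : Finset (Finset α)} {F : Finset α}

lemma mem_ascent {A : Finset α} :
    A ∈ ascent V (d + 1) C ↔ A ⊆ V ∧ A.card = d + 2 ∧ A.powersetCard (d + 1) ⊆ C := by
  simp [ascent, and_assoc]

lemma mem_closedNbhd_of_insert_mem_ascent {c : ℕ} {e : Finset α} {v : α}
    (h : insert v e ∈ ascent V c C) : v ∈ closedNbhd V (ascent V c C) e :=
  mem_union_right _ <| mem_filter.2
    ⟨(mem_powersetCard.1 (mem_filter.1 h).1).1 (mem_insert_self v e), h⟩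

lemma IsSMS.powersetCard_subset {T : Finset α} (hF : IsSMS V (d + 2) (ascent V (d + 1) C) F)
    (hT : T ⊆ closedNbhd V (ascent V (d + 1) C) F) (hTc : T.card = d + 2) :
    T.powersetCard (d + 1) ⊆ C :=
  (mem_ascent.1 (hF.2.2 T hT hTc)).2.2

/-- Pass to a face-minimal subcycle through `F`: if it is complete, any of its vertices outside
`F` works; otherwise one of its chords passes through `F` on fewer vertices. -/
lemma exists_insert_mem_ascent (hC : IsClutter V (d + 1) C) (h : Chorded d C)
    (hΛ : IsCycle d Λ) (hΛC : Λ ⊆ C) (hF : F ∈ Λ) :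
    ∃ w ∈ vertexSet Λ, w ∉ F ∧ insert w F ∈ ascent V (d + 1) C := by
  induction hn : (vertexSet Λ).card using Nat.strong_induction_on generalizing Λ with
  | _ n ih =>
  obtain ⟨Λ', hΛ'Λ, hFΛ', hmin⟩ := hΛ.exists_faceMinimalCycle_subset hF
  by_cases hcomp : DComplete d Λ'
  · obtain ⟨w, hwΛ', hwF⟩ := hmin.1.exists_mem_vertexSet_notMem hFΛ'
    have hsub : insert w F ⊆ vertexSet Λ' := insert_subset hwΛ' (subset_vertexSet hFΛ')
    refine ⟨w, vertexSet_mono hΛ'Λ hwΛ', hwF, mem_ascent.2 ⟨?_, ?_, fun G hG => ?_⟩⟩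
    · exact hsub.trans (hC.vertexSet_subset (hΛ'Λ.trans hΛC))
    · rw [card_insert_of_notMem hwF, hΛ.2.1 F hF]
    · rw [mem_powersetCard] at hG
      exact hΛC (hΛ'Λ (hcomp G (hG.1.trans hsub) hG.2))
  · obtain ⟨k, Ωs, -, hcyc, hcov, -, -, hvert⟩ := h Λ' hmin (hΛ'Λ.trans hΛC) hcomp
    obtain ⟨i, hi⟩ := hcov F hFΛ'
    have hlt : vertexSet (Ωs i) ⊂ vertexSet Λ := (hvert i).trans_subset (vertexSet_mono hΛ'Λ)
    obtain ⟨w, hw, hwF, hwA⟩ := ih _ (hn ▸ card_lt_card hlt) (hcyc i).1 (hcyc i).2 hi rfl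
    exact ⟨w, hlt.subset hw, hwF, hwA⟩

lemma exists_cone_chords (hF : IsSMS V (d + 2) (ascent V (d + 1) C) F) {u v : α}
    (hu : u ∈ closedNbhd V (ascent V (d + 1) C) F)
    (hv : v ∈ closedNbhd V (ascent V (d + 1) C) F) (huF : u ∉ F) (hvF : v ∉ F)
    (hΩ : insert u (insert v F) ⊆ vertexSet Ω) (hcard : d + 2 < (vertexSet Ω).card) :
    ∃ R : List (Finset (Finset α)), (∀ Y ∈ R, IsChordCycle d (C.erase F) Ω Y) ∧
      (R.map chain).sum =
        chain ((insert u F).powersetCard (d + 1)) + chain ((insert v F).powersetCard (d + 1)) := by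
  have hFc : F.card = d + 1 := by have := hF.1.1; omega
  obtain rfl | huv := eq_or_ne u v
  · exact ⟨[], by simp, by simp [ZModModule.add_self]⟩
  refine ⟨(F.powersetCard d).toList.map fun e => (insert u (insert v e)).powersetCard (d + 1),
    ?_, by rw [List.map_map]; exact sum_chain_cone hFc huv huF hvF⟩
  simp only [List.mem_map, mem_toList, forall_exists_index, and_imp, forall_apply_eq_imp_iff₂]
  intro e he
  rw [mem_powersetCard] at he
  have hue : u ∉ insert v e := by simpa [huv] using fun h => huF (he.1 h)
  have hT : (insert u (insert v e)).card = d + 2 := by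
    rw [card_insert_of_notMem hue, card_insert_of_notMem fun h => hvF (he.1 h), he.2]
  have hTΩ : insert u (insert v e) ⊆ vertexSet Ω :=
    (insert_subset_insert u (insert_subset_insert v he.1)).trans hΩ
  refine ⟨isCycle_powersetCard hT, fun G hG => mem_erase.2 ⟨?_, ?_⟩, ?_⟩
  · rintro rfl
    have hFe : G ⊆ e := by
      simpa [subset_insert_iff_of_notMem huF, subset_insert_iff_of_notMem hvF] using
        (mem_powersetCard.1 hG).1
    have := card_le_card hFe
    omega
  · have hTN : insert u (insert v e) ⊆ closedNbhd V (ascent V (d + 1) C) F :=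
      insert_subset hu (insert_subset hv (he.1.trans subset_union_left))
    exact hF.powersetCard_subset hTN hT hG
  · refine (vertexSet_powersetCard_subset _ _).trans_ssubset (ssubset_of_subset_of_ne hTΩ ?_)
    rintro h
    rw [h] at hT
    omega

lemma exists_chords_replacing (hC : IsClutter V (d + 1) C) (h : Chorded d C)
    (hF : IsSMS V (d + 2) (ascent V (d + 1) C) F) {w₀ : α}
    (hw₀ : w₀ ∈ closedNbhd V (ascent V (d + 1) C) F) (hw₀F : w₀ ∉ F) (hw₀Ω : w₀ ∈ vertexSet Ω)
    (hZ : IsChordCycle d C Ω Z) :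
    ∃ R : List (Finset (Finset α)), (∀ Y ∈ R, IsChordCycle d (C.erase F) Ω Y) ∧
      (R.map chain).sum = chain Z + chain Z F • chain ((insert w₀ F).powersetCard (d + 1)) := by
  obtain ⟨hZcyc, hZC, hZΩ⟩ := hZ
  by_cases hFZ : F ∉ Z
  · exact ⟨[Z], by simpa using ⟨hZcyc, subset_erase.2 ⟨hZC, hFZ⟩, hZΩ⟩, by simp [chain, hFZ]⟩
  push Not at hFZ
  obtain ⟨w, hwZ, hwF, hwA⟩ := exists_insert_mem_ascent hC h hZcyc hZC hFZ
  set S := (insert w F).powersetCard (d + 1)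
  have hwFZ : insert w F ⊆ vertexSet Z := insert_subset hwZ (subset_vertexSet hFZ)
  have hS : IsCycle d S :=
    isCycle_powersetCard (by rw [card_insert_of_notMem hwF, hZcyc.2.1 F hFZ])
  -- `Z ∆ S` no longer contains `F`; it splits into cycles, and the cones repair the change of apex
  obtain ⟨L₁, hL₁, hL₁sum⟩ := (hZcyc.isMod2Cycle.symmDiff hS.isMod2Cycle).exists_sum_chain_eq
  obtain ⟨L₂, hL₂, hL₂sum⟩ := exists_cone_chords hF (mem_closedNbhd_of_insert_mem_ascent hwA) hw₀
    hwF hw₀F (insert_subset (hZΩ.subset hwZ) (insert_subset hw₀Ω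
      ((subset_vertexSet hFZ).trans hZΩ.subset)))
    (by simpa [card_insert_of_notMem hwF, hZcyc.2.1 F hFZ] using
      (card_le_card hwFZ).trans_lt (card_lt_card hZΩ))
  refine ⟨L₁ ++ L₂, fun Y hY => (List.mem_append.1 hY).elim (fun hY => ?_) (hL₂ Y), ?_⟩
  · obtain ⟨hYcyc, hYZS⟩ := hL₁ Y hY
    have hSC : S ⊆ C := (mem_ascent.1 hwA).2.2
    have hFS : F ∈ S := mem_powersetCard.2 ⟨subset_insert w F, hZcyc.2.1 F hFZ⟩
    have hYZ : vertexSet Y ⊆ vertexSet Z := fun x hx => by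
      obtain ⟨G, hG, hxG⟩ := mem_vertexSet.1 hx
      rcases mem_symmDiff.1 (hYZS hG) with ⟨hGZ, -⟩ | ⟨hGS, -⟩
      · exact subset_vertexSet hGZ hxG
      · exact hwFZ ((mem_powersetCard.1 hGS).1 hxG)
    refine ⟨hYcyc, fun G hG => ?_, hYZ.trans_ssubset hZΩ⟩
    rcases mem_symmDiff.1 (hYZS hG) with ⟨hGZ, hGS⟩ | ⟨hGS, hGZ⟩
    · exact mem_erase.2 ⟨fun h => hGS (h ▸ hFS), hZC hGZ⟩
    · exact mem_erase.2 ⟨fun h => hGZ (h ▸ hFZ), hSC hGS⟩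
  · rw [List.map_append, List.sum_append, hL₁sum, hL₂sum, chain_symmDiff,
      ZModModule.add_add_add_cancel]
    simp [chain, hFZ]

end SimplicialFace

/-- If `⟨C⟩` is `d`-chorded and `F ∈ SMS(C⁺)`, then `⟨C − F⟩` is `d`-chorded,
where `C − F = C \ {F}`. -/
theorem chorded_del_sms (V : Finset α) (d : ℕ) (C : Finset (Finset α))
    (hC : IsClutter V (d + 1) C) (h : Chorded d C)
    (F : Finset α) (hF : IsSMS V (d + 2) (ascent V (d + 1) C) F) :
    Chorded d (C.erase F) := by
  refine chorded_iff.2 fun Ω hΩ hΩC hΩnc => ?_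
  have hFΩ : F ∉ Ω := fun hFΩ => (mem_erase.1 (hΩC hFΩ)).1 rfl
  obtain ⟨L₀, hL₀, hL₀sum⟩ := chorded_iff.1 h Ω hΩ (hΩC.trans (erase_subset F C)) hΩnc
  by_cases hFL₀ : ∃ Z ∈ L₀, F ∈ Z
  swap
  · push Not at hFL₀
    exact ⟨L₀, fun Z hZ => ⟨(hL₀ Z hZ).1, subset_erase.2 ⟨(hL₀ Z hZ).2.1, hFL₀ Z hZ⟩,
      (hL₀ Z hZ).2.2⟩, hL₀sum⟩
  obtain ⟨Z₀, hZ₀, hFZ₀⟩ := hFL₀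
  obtain ⟨w₀, hw₀, hw₀F, hw₀A⟩ :=
    exists_insert_mem_ascent hC h (hL₀ Z₀ hZ₀).1 (hL₀ Z₀ hZ₀).2.1 hFZ₀
  obtain ⟨L, hL, hLsum⟩ := exists_list_sum_map_eq fun Z hZ =>
    exists_chords_replacing hC h hF (mem_closedNbhd_of_insert_mem_ascent hw₀A) hw₀F
      ((hL₀ Z₀ hZ₀).2.2.subset hw₀) (hL₀ Z hZ)
  exact ⟨L, hL, hLsum.trans (sum_map_chain_add_smul hL₀sum hFΩ _)⟩

end ClutterPaper
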